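/- Suppose that for every arm a ≠ a*, the only vector x ∈ ℝ^d with X_{a*}x = 0 and X_a x = 0 is x = 0 (i.e., Null(X_{a*}) ∩ Null(X_a) = {0}). Then every nonzero context x ∈ ℝ^d can be ε-strongly attacked into pulling a*. -/

import Mathlib

open Matrix

/-- The regularized Gram matrix `V = XᵀX + λI`. -/
noncomputable def Vmat {m d : ℕ} (lam : ℝ) (X : Matrix (Fin m) (Fin d) ℝ) :
    Matrix (Fin d) (Fin d) ℝ :=
  Xᵀ * X + lam • (1 : Matrix (Fin d) (Fin d) ℝ)

/-- The Mahalanobis norm `‖x‖_{V⁻¹} = √(xᵀ V⁻¹ x)`. -/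
noncomputable def mahNorm {d : ℕ} (V : Matrix (Fin d) (Fin d) ℝ) (x : Fin d → ℝ) : ℝ :=
  Real.sqrt (x ⬝ᵥ (V⁻¹ *ᵥ x))

/-- The post-attack ridge regression estimate `θ̂ = V⁻¹ Xᵀ (y + Δ)`. -/
noncomputable def thetaHat {m d : ℕ} (lam : ℝ) (X : Matrix (Fin m) (Fin d) ℝ)
    (y Δ : Fin m → ℝ) : Fin d → ℝ :=
  (Vmat lam X)⁻¹ *ᵥ (Xᵀ *ᵥ (y + Δ))

/-- The post-attack UCB index of arm `a` at context `x`: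
`xᵀ θ̂_a(Δ_a) + α_a ‖x‖_{V_a⁻¹}`. -/
noncomputable def ucbIndex {K d : ℕ} (lam : ℝ) (m : Fin K → ℕ)
    (X : ∀ a, Matrix (Fin (m a)) (Fin d) ℝ) (y : ∀ a, Fin (m a) → ℝ)
    (α : Fin K → ℝ) (Δ : ∀ a, Fin (m a) → ℝ) (x : Fin d → ℝ) (a : Fin K) : ℝ :=
  x ⬝ᵥ thetaHat lam (X a) (y a) (Δ a) + α a * mahNorm (Vmat lam (X a)) x

/-- The perturbation family `Δ` ε-strongly attacks context `x` into pulling arm `astar`. -/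
def StronglyAttacks {K d : ℕ} (lam : ℝ) (m : Fin K → ℕ)
    (X : ∀ a, Matrix (Fin (m a)) (Fin d) ℝ) (y : ∀ a, Fin (m a) → ℝ)
    (α : Fin K → ℝ) (astar : Fin K) (ε : ℝ)
    (Δ : ∀ a, Fin (m a) → ℝ) (x : Fin d → ℝ) : Prop :=
  ∀ a : Fin K, a ≠ astar →
    ucbIndex lam m X y α Δ x astar ≥ ε + ucbIndex lam m X y α Δ x a

/-- The perturbation family `Δ` weakly attacks context `x` into pulling arm `astar`. -/
def WeaklyAttacks {K d : ℕ} (lam : ℝ) (m : Fin K → ℕ)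
    (X : ∀ a, Matrix (Fin (m a)) (Fin d) ℝ) (y : ∀ a, Fin (m a) → ℝ)
    (α : Fin K → ℝ) (astar : Fin K)
    (Δ : ∀ a, Fin (m a) → ℝ) (x : Fin d → ℝ) : Prop :=
  ∀ a : Fin K, a ≠ astar →
    ucbIndex lam m X y α Δ x astar > ucbIndex lam m X y α Δ x a

/-!
The estimate enters the index only through `xᵀθ̂_a(Δ_a) = w_a ⬝ (y_a + Δ_a)`, where
`w_a = X_a V_a⁻¹ x`, so each index is affine in the arm's own perturbation with slope `w_a`, and
`w_a = 0` forces `X_a x = 0`. For `x ≠ 0` the null-space hypothesis therefore leaves two cases: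
either `w_{a*} ≠ 0`, and perturbing the target alone lifts its index `ε` above every unperturbed
index, or `w_a ≠ 0` for every `a ≠ a*`, and leaving the target alone, each of those indices can
be pushed `ε` below the target's.
-/

noncomputable def ridgeSensitivity {m d : ℕ} (lam : ℝ) (X : Matrix (Fin m) (Fin d) ℝ)
    (x : Fin d → ℝ) : Fin m → ℝ :=
  X *ᵥ ((Vmat lam X)⁻¹ *ᵥ x)

section Ridge

variable {m d : ℕ} (lam : ℝ) (X : Matrix (Fin m) (Fin d) ℝ)

theorem Vmat_posDef {lam : ℝ} (hlam : 0 < lam) : (Vmat lam X).PosDef := by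
  have hgram : (Xᵀ * X).PosSemidef := by
    simpa using Matrix.posSemidef_conjTranspose_mul_self X
  have hscalar : (lam • (1 : Matrix (Fin d) (Fin d) ℝ)).PosDef := by
    rw [Matrix.smul_one_eq_diagonal]
    exact Matrix.posDef_diagonal_iff.mpr fun _ => hlam
  rw [Vmat, add_comm]
  exact hscalar.add_posSemidef hgram

theorem Vmat_transpose : (Vmat lam X)ᵀ = Vmat lam X := by
  simp [Vmat, Matrix.transpose_add, Matrix.transpose_mul, Matrix.transpose_smul]

theorem Vmat_mulVec (v : Fin d → ℝ) : Vmat lam X *ᵥ v = Xᵀ *ᵥ (X *ᵥ v) + lam • v := by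
  simp [Vmat, Matrix.add_mulVec, Matrix.smul_mulVec, mulVec_mulVec]

theorem dotProduct_thetaHat (x : Fin d → ℝ) (y Δ : Fin m → ℝ) :
    x ⬝ᵥ thetaHat lam X y Δ = ridgeSensitivity lam X x ⬝ᵥ (y + Δ) := by
  have hsymm : ((Vmat lam X)⁻¹)ᵀ = (Vmat lam X)⁻¹ := by
    rw [Matrix.transpose_nonsing_inv, Vmat_transpose]
  rw [thetaHat, ridgeSensitivity, Matrix.dotProduct_mulVec x, ← Matrix.mulVec_transpose, hsymm,
    Matrix.dotProduct_mulVec, Matrix.vecMul_transpose]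

theorem mulVec_eq_zero_of_ridgeSensitivity_eq_zero {lam : ℝ} (hlam : 0 < lam) {x : Fin d → ℝ}
    (hw : ridgeSensitivity lam X x = 0) : X *ᵥ x = 0 := by
  have hdet : IsUnit (Vmat lam X).det := (Vmat_posDef X hlam).det_pos.ne'.isUnit
  -- `V (V⁻¹ x) = x`, and the Gram part of `V` vanishes on `V⁻¹ x`, so `x = λ V⁻¹ x`.
  have hx : lam • ((Vmat lam X)⁻¹ *ᵥ x) = x := by
    have hV : Vmat lam X *ᵥ ((Vmat lam X)⁻¹ *ᵥ x) = x := by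
      rw [mulVec_mulVec, Matrix.mul_nonsing_inv _ hdet, Matrix.one_mulVec]
    rwa [Vmat_mulVec, ← ridgeSensitivity, hw, Matrix.mulVec_zero, zero_add] at hV
  rw [← hx, Matrix.mulVec_smul, ← ridgeSensitivity, hw, smul_zero]

end Ridge

theorem exists_dotProduct_add_eq {n : ℕ} {w : Fin n → ℝ} (hw : w ≠ 0) (y : Fin n → ℝ) (t : ℝ) :
    ∃ δ : Fin n → ℝ, w ⬝ᵥ (y + δ) = t := by
  have hww : w ⬝ᵥ w ≠ 0 := fun h => hw (dotProduct_self_eq_zero.1 h)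
  refine ⟨((t - w ⬝ᵥ y) / (w ⬝ᵥ w)) • w, ?_⟩
  rw [dotProduct_add, dotProduct_smul, smul_eq_mul, div_mul_cancel₀ _ hww]
  ring

section Attack

variable {K d : ℕ} (lam : ℝ) (m : Fin K → ℕ) (X : ∀ a, Matrix (Fin (m a)) (Fin d) ℝ)
  (y : ∀ a, Fin (m a) → ℝ) (α : Fin K → ℝ) (astar : Fin K) (ε : ℝ) (x : Fin d → ℝ)

theorem ucbIndex_eq (Δ : ∀ a, Fin (m a) → ℝ) (a : Fin K) :
    ucbIndex lam m X y α Δ x a =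
      ridgeSensitivity lam (X a) x ⬝ᵥ (y a + Δ a) + α a * mahNorm (Vmat lam (X a)) x := by
  rw [ucbIndex, dotProduct_thetaHat]

theorem exists_stronglyAttacks_of_ridgeSensitivity_ne_zero
    (hw : ridgeSensitivity lam (X astar) x ≠ 0) :
    ∃ Δ, StronglyAttacks lam m X y α astar ε Δ x := by
  set M := Finset.univ.sup' ⟨astar, Finset.mem_univ _⟩ (ucbIndex lam m X y α 0 x)
  obtain ⟨δ, hδ⟩ :=
    exists_dotProduct_add_eq hw (y astar) (ε + M - α astar * mahNorm (Vmat lam (X astar)) x)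
  refine ⟨Function.update 0 astar δ, fun a ha => ?_⟩
  have htarget : ucbIndex lam m X y α (Function.update 0 astar δ) x astar = ε + M := by
    rw [ucbIndex_eq, Function.update_self, hδ]
    ring
  have hother : ucbIndex lam m X y α (Function.update 0 astar δ) x a =
      ucbIndex lam m X y α 0 x a := by
    rw [ucbIndex_eq, ucbIndex_eq, Function.update_of_ne ha]
  have hle : ucbIndex lam m X y α 0 x a ≤ M := Finset.le_sup' _ (Finset.mem_univ a)
  rw [htarget, hother]
  linarith

theorem exists_stronglyAttacks_of_forall_ridgeSensitivity_ne_zero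
    (hw : ∀ a, a ≠ astar → ridgeSensitivity lam (X a) x ≠ 0) :
    ∃ Δ, StronglyAttacks lam m X y α astar ε Δ x := by
  have hδ : ∀ a, ∃ δ : Fin (m a) → ℝ, (a = astar → δ = 0) ∧ (a ≠ astar →
      ridgeSensitivity lam (X a) x ⬝ᵥ (y a + δ) =
        ucbIndex lam m X y α 0 x astar - ε - α a * mahNorm (Vmat lam (X a)) x) := by
    intro a
    by_cases ha : a = astar
    · exact ⟨0, fun _ => rfl, fun h => (h ha).elim⟩
    · obtain ⟨δ, hδ⟩ := exists_dotProduct_add_eq (hw a ha) (y a) _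
      exact ⟨δ, fun h => (ha h).elim, fun _ => hδ⟩
  choose Δ hΔtarget hΔ using hδ
  refine ⟨Δ, fun a ha => ?_⟩
  have htarget : ucbIndex lam m X y α Δ x astar = ucbIndex lam m X y α 0 x astar := by
    rw [ucbIndex_eq, ucbIndex_eq, hΔtarget astar rfl]
    rfl
  rw [htarget, ucbIndex_eq _ _ _ _ _ _ Δ, hΔ a ha]
  linarith

end Attack

theorem attackable_of_trivial_null_intersection_general {K d : ℕ}
    (lam : ℝ) (hlam : 0 < lam) (m : Fin K → ℕ)
    (X : ∀ a, Matrix (Fin (m a)) (Fin d) ℝ) (y : ∀ a, Fin (m a) → ℝ)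
    (α : Fin K → ℝ) (astar : Fin K) (ε : ℝ)
    (h : ∀ a : Fin K, a ≠ astar →
      ∀ z : Fin d → ℝ, X astar *ᵥ z = 0 → X a *ᵥ z = 0 → z = 0) :
    ∀ x : Fin d → ℝ, x ≠ 0 →
      ∃ Δ : ∀ a, Fin (m a) → ℝ, StronglyAttacks lam m X y α astar ε Δ x := by
  intro x hx
  by_cases hstar : ridgeSensitivity lam (X astar) x = 0
  · refine exists_stronglyAttacks_of_forall_ridgeSensitivity_ne_zero lam m X y α astar ε x
      fun a ha hwa => hx ?_
    exact h a ha x (mulVec_eq_zero_of_ridgeSensitivity_eq_zero _ hlam hstar)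
      (mulVec_eq_zero_of_ridgeSensitivity_eq_zero _ hlam hwa)
  · exact exists_stronglyAttacks_of_ridgeSensitivity_ne_zero lam m X y α astar ε x hstar

/-- If for every non-target arm `a` we have `Null(X_{a*}) ∩ Null(X_a) = {0}`, then
every nonzero context can be ε-strongly attacked into pulling `a*`. -/
theorem attackable_of_trivial_null_intersection {K d : ℕ} (hK : 2 ≤ K) (hd : 1 ≤ d)
    (lam : ℝ) (hlam : 0 < lam) (m : Fin K → ℕ)
    (X : ∀ a, Matrix (Fin (m a)) (Fin d) ℝ) (y : ∀ a, Fin (m a) → ℝ)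
    (α : Fin K → ℝ) (astar : Fin K) (ε : ℝ) (hε : 0 < ε)
    (h : ∀ a : Fin K, a ≠ astar →
      ∀ z : Fin d → ℝ, X astar *ᵥ z = 0 → X a *ᵥ z = 0 → z = 0) :
    ∀ x : Fin d → ℝ, x ≠ 0 →
      ∃ Δ : ∀ a, Fin (m a) → ℝ, StronglyAttacks lam m X y α astar ε Δ x :=
  attackable_of_trivial_null_intersection_general lam hlam m X y α astar ε h
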